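/- Let G be a finite simple graph on vertex set {x_{11}, …, x_{n1}} with no isolated vertex. Let C_1, …, C_m (0 ≤ m ≤ n) be cycle graphs with x_{i1} ∈ V(C_i), and let G_{m+1}, …, G_n be connected chordal graphs with at least two vertices such that x_{i1} is a neighbor of a simplicial vertex of G_i for each i = m+1, …, n. Set G' = G(C_1, …, C_m, G_{m+1}, …, G_n). Then G' is unmixed if and only if every cycle C_i (1 ≤ i ≤ m) has length 3 or 5 and G_i is unmixed for every i = m+1, …, n. -/

import Mathlib

variable {V : Type*} [DecidableEq V]

/-- `S` is an independent set of the induced subgraph of `G` on the vertex set `A`. -/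
def IsIndepIn (G : SimpleGraph V) (A S : Finset V) : Prop :=
  S ⊆ A ∧ ∀ u ∈ S, ∀ v ∈ S, ¬G.Adj u v

/-- `S` is a maximal independent set of the induced subgraph of `G` on the vertex set `A`. -/
def IsMaxIndepIn (G : SimpleGraph V) (A S : Finset V) : Prop :=
  IsIndepIn G A S ∧ ∀ T, IsIndepIn G A T → S ⊆ T → S = T

/-- The induced subgraph of `G` on `A` is unmixed: all maximal independent sets
have the same cardinality. -/
def UnmixedOn (G : SimpleGraph V) (A : Finset V) : Prop :=
  ∀ S T, IsMaxIndepIn G A S → IsMaxIndepIn G A T → S.card = T.card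

open scoped Classical in
/-- The vertex set `A \ N_G[x]`. -/
noncomputable def delClosedNbhd (G : SimpleGraph V) (A : Finset V) (x : V) : Finset V :=
  A.filter fun y => y ≠ x ∧ ¬G.Adj x y

/-- The induced subgraph of `G` on `A` is vertex decomposable. -/
inductive VertexDecomposableOn (G : SimpleGraph V) : Finset V → Prop
  | edgeless (A : Finset V) (h : ∀ u ∈ A, ∀ v ∈ A, ¬G.Adj u v) : VertexDecomposableOn G A
  | shed (A : Finset V) (x : V) (hx : x ∈ A)
      (hlink : VertexDecomposableOn G (delClosedNbhd G A x))
      (hdel : VertexDecomposableOn G (A.erase x))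
      (hexch : ∀ S, IsIndepIn G (delClosedNbhd G A x) S →
        ∃ y ∈ A, G.Adj x y ∧ IsIndepIn G (A.erase x) (insert y S)) :
      VertexDecomposableOn G A

/-- `x` is a shedding vertex of the induced subgraph of `G` on `A`. -/
def IsSheddingVertexOn (G : SimpleGraph V) (A : Finset V) (x : V) : Prop :=
  x ∈ A ∧
  VertexDecomposableOn G (delClosedNbhd G A x) ∧
  VertexDecomposableOn G (A.erase x) ∧
  ∀ S, IsIndepIn G (delClosedNbhd G A x) S →
    ∃ y ∈ A, G.Adj x y ∧ IsIndepIn G (A.erase x) (insert y S)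

/-- The independence complex of the induced subgraph of `G` on `A` is shellable:
there is an ordering `F 0, F 1, …` of its facets (the maximal independent sets) such
that for every `i`, every face of the subcomplex `(⋃ j < i, ⟨F j⟩) ∩ ⟨F i⟩` is contained
in a face of that subcomplex of cardinality `(F i).card - 1` (i.e. the subcomplex is
pure of dimension `dim (F i) - 1`). -/
def ShellableOn (G : SimpleGraph V) (A : Finset V) : Prop :=
  ∃ (t : ℕ) (F : Fin t → Finset V),
    Function.Injective F ∧
    (∀ S, IsMaxIndepIn G A S ↔ ∃ i, F i = S) ∧
    ∀ i : Fin t, ∀ S : Finset V, S ⊆ F i → (∃ j, j < i ∧ S ⊆ F j) →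
      ∃ S' : Finset V, S ⊆ S' ∧ S' ⊆ F i ∧ (∃ j, j < i ∧ S' ⊆ F j) ∧
        S'.card = (F i).card - 1

/-- A graph is chordal if every cycle of length at least four has a chord, i.e. an
edge of the graph joining two vertices of the cycle that is not an edge of the cycle. -/
def IsChordal (G : SimpleGraph V) : Prop :=
  ∀ (x : V) (w : G.Walk x x), w.IsCycle → 4 ≤ w.length →
    ∃ u v, u ∈ w.support ∧ v ∈ w.support ∧ G.Adj u v ∧ s(u, v) ∉ w.edges

/-- The induced subgraph of `G` on `A` is a cycle graph on `m` vertices. -/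
def IsCycleGraphOn (G : SimpleGraph V) (A : Finset V) (m : ℕ) : Prop :=
  (∀ u v, G.Adj u v → u ∈ A ∧ v ∈ A) ∧
  Nonempty (G.induce (A : Set V) ≃g SimpleGraph.cycleGraph m)

/-- The independence number of the induced subgraph of `G` on `A`. -/
noncomputable def indepNumOn (G : SimpleGraph V) (A : Finset V) : ℕ :=
  sSup {k | ∃ S, IsIndepIn G A S ∧ S.card = k}

/-!
A maximal independent set `S` of `G' = G(G_1, …, G_n)` meets each block `B_i` in a maximal
independent set of `G_i` when `x_i ∈ S`, and of `G_i - x_i` otherwise. Conversely, block facets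
glue to a facet of `G'` as long as the chosen roots are pairwise non-adjacent in `G` and each
omitted root not dominated inside its block is dominated by a chosen root. Hence `G'` is unmixed
once the facets of `G_i` and of `G_i - x_i` all have one common size: for `C_3` and `C_5` this is
a finite check, and for `G_i` unmixed with `x_i` adjacent to a simplicial vertex, every facet of
`G_i - x_i` already is a facet of `G_i`. Conversely, fixing facets of the other blocks shows that
unmixedness of `G'` forces each `G_i` to be unmixed and, choosing a root `x_j` adjacent to `x_i`,
each `C_i - x_i ≅ P_{ℓ-1}` to be unmixed; but `P_3` and `P_k`, `k ≥ 5`, have facets of two sizes.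
-/

section Facets

variable {α : Type*} {K H : SimpleGraph α} {A A' S R : Finset α} {x y z : α}

theorem isMaxIndepIn_iff :
    IsMaxIndepIn K A S ↔ IsIndepIn K A S ∧ ∀ v ∈ A, v ∉ S → ∃ u ∈ S, K.Adj u v := by
  classical
  refine ⟨fun ⟨hS, hmax⟩ => ⟨hS, fun v hvA hvS => ?_⟩, fun ⟨hS, hdom⟩ => ⟨hS, fun T hT hST => ?_⟩⟩
  · by_contra! hno
    have hins : IsIndepIn K A (insert v S) := by
      refine ⟨Finset.insert_subset hvA hS.1, ?_⟩
      simp only [Finset.mem_insert]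
      rintro a (rfl | ha) b (rfl | hb) hab
      exacts [K.loopless.irrefl _ hab, hno b hb hab.symm, hno a ha hab, hS.2 a ha b hb hab]
    exact hvS (hmax _ hins (Finset.subset_insert v S) ▸ Finset.mem_insert_self v S)
  · refine hST.antisymm fun v hvT => ?_
    by_contra hvS
    obtain ⟨u, huS, huv⟩ := hdom v (hT.1 hvT) hvS
    exact hT.2 u (hST huS) v hvT huv

theorem isIndepIn_singleton (hx : x ∈ A) : IsIndepIn K A {x} :=
  ⟨Finset.singleton_subset_iff.2 hx, by simp⟩

theorem IsIndepIn.exists_isMaxIndepIn_superset (h : IsIndepIn K A S) :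
    ∃ T, S ⊆ T ∧ IsMaxIndepIn K A T := by
  have hfin : {T | IsIndepIn K A T}.Finite :=
    A.powerset.finite_toSet.subset fun T hT => Finset.mem_powerset.2 hT.1
  obtain ⟨T, hST, hT⟩ := hfin.exists_le_maximal h
  exact ⟨T, hST, hT.1, fun T' hT' hTT' => hTT'.antisymm (hT.2 hT' hTT')⟩

theorem exists_isMaxIndepIn_mem (hx : x ∈ A) : ∃ T, IsMaxIndepIn K A T ∧ x ∈ T := by
  obtain ⟨T, hxT, hT⟩ := (isIndepIn_singleton (K := K) hx).exists_isMaxIndepIn_superset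
  exact ⟨T, hT, hxT (Finset.mem_singleton_self x)⟩

theorem exists_isMaxIndepIn_notMem (hy : y ∈ A) (hxy : K.Adj x y) :
    ∃ T, IsMaxIndepIn K A T ∧ x ∉ T := by
  obtain ⟨T, hT, hyT⟩ := exists_isMaxIndepIn_mem (K := K) hy
  exact ⟨T, hT, fun hxT => hT.1.2 x hxT y hyT hxy⟩

theorem IsMaxIndepIn.of_erase_of_simplicial [DecidableEq α] (hz : z ∈ A) (hzx : K.Adj z x)
    (hsimp : ∀ u v, K.Adj z u → K.Adj z v → u ≠ v → K.Adj u v)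
    (hS : IsMaxIndepIn K (A.erase x) S) : IsMaxIndepIn K A S := by
  rw [isMaxIndepIn_iff] at hS ⊢
  obtain ⟨⟨hSA, hSind⟩, hdom⟩ := hS
  refine ⟨⟨hSA.trans (Finset.erase_subset x A), hSind⟩, fun v hvA hvS => ?_⟩
  obtain rfl | hvx := eq_or_ne v x
  · by_cases hzS : z ∈ S
    · exact ⟨z, hzS, hzx⟩
    obtain ⟨w, hwS, hwz⟩ := hdom z (Finset.mem_erase.2 ⟨hzx.ne, hz⟩) hzS
    exact ⟨w, hwS, hsimp w v hwz.symm hzx fun h => (Finset.mem_erase.1 (hSA (h ▸ hwS))).1 rfl⟩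
  · exact hdom v (Finset.mem_erase.2 ⟨hvx, hvA⟩) hvS

theorem UnmixedOn.of_isMaxIndepIn_union [DecidableEq α] (hH : UnmixedOn H A) (hR : Disjoint A' R)
    (hext : ∀ P, IsMaxIndepIn K A' P → IsMaxIndepIn H A (P ∪ R)) : UnmixedOn K A' := by
  intro S T hS hT
  have h := hH _ _ (hext S hS) (hext T hT)
  rwa [Finset.card_union_of_disjoint (hR.mono_left hS.1.1),
    Finset.card_union_of_disjoint (hR.mono_left hT.1.1), Nat.add_right_cancel_iff] at h

def UnmixedWithErase [DecidableEq α] (K : SimpleGraph α) (A : Finset α) (x : α) :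
    Prop :=
  ∃ r, ∀ P, IsMaxIndepIn K A P ∨ IsMaxIndepIn K (A.erase x) P → P.card = r

theorem UnmixedOn.unmixedWithErase_of_simplicial [DecidableEq α] (hK : UnmixedOn K A) (hz : z ∈ A)
    (hzx : K.Adj z x) (hsimp : ∀ u v, K.Adj z u → K.Adj z v → u ≠ v → K.Adj u v) :
    UnmixedWithErase K A x := by
  obtain ⟨P₀, hP₀, -⟩ := exists_isMaxIndepIn_mem (K := K) hz
  exact ⟨P₀.card, fun P hP => hK P P₀ (hP.elim id (·.of_erase_of_simplicial hz hzx hsimp)) hP₀⟩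

end Facets

section Embedding

variable {α β : Type*} {K' : SimpleGraph α} {K : SimpleGraph β}

theorem isMaxIndepIn_map_iff (f : K' ↪g K) {C F : Finset α} :
    IsMaxIndepIn K (C.map f.toEmbedding) (F.map f.toEmbedding) ↔ IsMaxIndepIn K' C F := by
  simp [isMaxIndepIn_iff, IsIndepIn, Finset.map_subset_map]

theorem IsMaxIndepIn.exists_eq_map (f : K' ↪g K) {C : Finset α} {S : Finset β}
    (h : IsMaxIndepIn K (C.map f.toEmbedding) S) :
    ∃ F, IsMaxIndepIn K' C F ∧ S = F.map f.toEmbedding := by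
  obtain ⟨F, -, rfl⟩ := Finset.subset_map_iff.1 h.1.1
  exact ⟨F, (isMaxIndepIn_map_iff f).1 h, rfl⟩

theorem UnmixedOn.of_embedding (f : K' ↪g K) {C : Finset α}
    (h : UnmixedOn K (C.map f.toEmbedding)) : UnmixedOn K' C := fun S T hS hT => by
  simpa using h _ _ ((isMaxIndepIn_map_iff f).2 hS) ((isMaxIndepIn_map_iff f).2 hT)

end Embedding

theorem Fin.val_castSucc_sub_castSucc_eq_one {k : ℕ} {a b : Fin k} :
    ((a.castSucc - b.castSucc : Fin (k + 1)) : ℕ) = 1 ↔ (b : ℕ) + 1 = a := by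
  rcases le_or_gt b a with h | h
  · rw [Fin.coe_sub_iff_le.2 (Fin.castSucc_le_castSucc_iff.2 h)]
    simp only [Fin.val_castSucc]
    omega
  · rw [Fin.coe_sub_iff_lt.2 (Fin.castSucc_lt_castSucc_iff.2 h)]
    simp only [Fin.val_castSucc]
    omega

namespace SimpleGraph

variable {m k : ℕ}

theorem cycleGraph_adj_add_right {u v c : Fin (k + 1)} :
    (cycleGraph (k + 1)).Adj (u + c) (v + c) ↔ (cycleGraph (k + 1)).Adj u v := by
  simp only [cycleGraph_adj', add_sub_add_right_eq_sub]

theorem cycleGraph_adj_castSucc {a b : Fin k} :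
    (cycleGraph (k + 1)).Adj a.castSucc b.castSucc ↔ (pathGraph k).Adj a b := by
  rw [cycleGraph_adj', pathGraph_adj, Fin.val_castSucc_sub_castSucc_eq_one,
    Fin.val_castSucc_sub_castSucc_eq_one, or_comm]

def cycleGraph.pathEmbedding (k : ℕ) (q : Fin (k + 1)) : pathGraph k ↪g cycleGraph (k + 1) where
  toFun a := a.castSucc + (q + 1)
  inj' _ _ h := Fin.castSucc_injective k (add_right_cancel h)
  map_rel_iff' := cycleGraph_adj_add_right.trans cycleGraph_adj_castSucc

theorem cycleGraph.map_pathEmbedding (q : Fin (k + 1)) :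
    Finset.univ.map (cycleGraph.pathEmbedding k q).toEmbedding = Finset.univ.erase q := by
  refine Finset.eq_of_subset_of_card_le (fun v hv => ?_) (by simp)
  obtain ⟨a, -, rfl⟩ := Finset.mem_map.1 hv
  refine Finset.mem_erase.2 ⟨fun h => Fin.castSucc_ne_last a ?_, Finset.mem_univ _⟩
  calc a.castSucc = q - (q + 1) := eq_sub_of_add_eq h
    _ = Fin.last k := by rw [sub_add_cancel_left, ← Fin.neg_last, neg_neg]

theorem isMaxIndepIn_pathGraph_filter {p : ℕ → Prop} [DecidablePred p]
    (hind : ∀ i, i + 1 < k → ¬(p i ∧ p (i + 1)))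
    (hdom : ∀ i < k, ¬p i → (i + 1 < k ∧ p (i + 1)) ∨ (0 < i ∧ p (i - 1))) :
    IsMaxIndepIn (pathGraph k) Finset.univ (Finset.univ.filter fun a : Fin k => p a) := by
  rw [isMaxIndepIn_iff]
  refine ⟨⟨Finset.subset_univ _, fun a ha b hb hab => ?_⟩, fun v _ hv => ?_⟩
  · simp only [Finset.mem_filter, Finset.mem_univ, true_and] at ha hb
    rcases pathGraph_adj.1 hab with h | h
    · exact hind a (h ▸ b.2) ⟨ha, h ▸ hb⟩
    · exact hind b (h ▸ a.2) ⟨hb, h ▸ ha⟩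
  simp only [Finset.mem_filter, Finset.mem_univ, true_and] at hv ⊢
  rcases hdom v v.2 hv with ⟨hlt, hp⟩ | ⟨hpos, hp⟩
  · exact ⟨⟨v + 1, hlt⟩, hp, pathGraph_adj.2 (Or.inr rfl)⟩
  · exact ⟨⟨v - 1, by omega⟩, hp, pathGraph_adj.2 (Or.inl (by simp only; omega))⟩

theorem pathGraph_not_unmixedOn (hk3 : 3 ≤ k) (hk4 : k ≠ 4) :
    ¬UnmixedOn (pathGraph k) Finset.univ := by
  intro h
  -- `{0, 2} ∪ X` and `{1} ∪ X` are facets, where `X` is the set of even vertices `≥ 4`;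
  -- `k ≠ 4` is what lets the vertex `4` dominate the vertex `3` in the second one
  set X := Finset.univ.filter fun a : Fin k => 4 ≤ (a : ℕ) ∧ (a : ℕ) % 2 = 0
  have h₀₂ : Finset.univ.filter (fun a : Fin k => (a : ℕ) = 0 ∨ (a : ℕ) = 2 ∨
      (4 ≤ (a : ℕ) ∧ (a : ℕ) % 2 = 0)) = insert ⟨0, by omega⟩ (insert ⟨2, by omega⟩ X) := by
    ext a; simp [X, Fin.ext_iff]
  have h₁ : Finset.univ.filter (fun a : Fin k => (a : ℕ) = 1 ∨
      (4 ≤ (a : ℕ) ∧ (a : ℕ) % 2 = 0)) = insert ⟨1, by omega⟩ X := by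
    ext a; simp [X, Fin.ext_iff]
  have hcard := h _ _
    (isMaxIndepIn_pathGraph_filter (p := fun i => i = 0 ∨ i = 2 ∨ (4 ≤ i ∧ i % 2 = 0))
      (by intros; omega) (by intros; omega))
    (isMaxIndepIn_pathGraph_filter (p := fun i => i = 1 ∨ (4 ≤ i ∧ i % 2 = 0))
      (by intros; omega) (by intros; omega))
  rw [h₀₂, h₁, Finset.card_insert_of_notMem, Finset.card_insert_of_notMem,
    Finset.card_insert_of_notMem] at hcard
  · omega
  all_goals simp [X, Fin.ext_iff]

set_option synthInstance.maxSize 256 in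
theorem cycleGraph_card_of_isMaxIndepIn (hm : m = 3 ∨ m = 5) (q : Fin m) (F : Finset (Fin m))
    (hF : IsMaxIndepIn (cycleGraph m) Finset.univ F ∨
      IsMaxIndepIn (cycleGraph m) (Finset.univ.erase q) F) : F.card = m / 2 := by
  rcases hm with rfl | rfl <;> revert q F <;> unfold IsMaxIndepIn IsIndepIn <;> decide

end SimpleGraph

section CycleGraphOn

open SimpleGraph

variable {α : Type*} {K : SimpleGraph α} {A : Finset α} {x : α} {m : ℕ}

theorem IsCycleGraphOn.exists_embedding (h : IsCycleGraphOn K A m) :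
    ∃ f : cycleGraph m ↪g K, Finset.univ.map f.toEmbedding = A := by
  obtain ⟨-, ⟨e⟩⟩ := h
  refine ⟨(Embedding.induce (A : Set α)).comp e.symm.toEmbedding, ?_⟩
  ext v
  simp only [Finset.mem_map, Finset.mem_univ, true_and]
  refine ⟨?_, fun hv => ⟨e ⟨v, hv⟩, by simp⟩⟩
  rintro ⟨a, rfl⟩
  exact (e.symm a).2

theorem IsCycleGraphOn.exists_adj (h : IsCycleGraphOn K A m) (hm : 2 ≤ m) (hx : x ∈ A) :
    ∃ y, K.Adj x y := by
  obtain ⟨f, rfl⟩ := h.exists_embedding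
  obtain ⟨q, -, rfl⟩ := Finset.mem_map.1 hx
  obtain ⟨k, rfl⟩ : ∃ k, m = k + 2 := ⟨m - 2, by omega⟩
  exact ⟨f (q + 1), f.map_adj_iff.2 (cycleGraph_adj.2 (Or.inr (add_sub_cancel_left q 1)))⟩

variable [DecidableEq α]

theorem IsCycleGraphOn.unmixedWithErase (h : IsCycleGraphOn K A m) (hm : m = 3 ∨ m = 5)
    (hx : x ∈ A) : UnmixedWithErase K A x := by
  obtain ⟨f, rfl⟩ := h.exists_embedding
  obtain ⟨q, -, rfl⟩ := Finset.mem_map.1 hx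
  refine ⟨m / 2, fun P hP => ?_⟩
  rw [← Finset.map_erase] at hP
  obtain ⟨F, hF, rfl⟩ | ⟨F, hF, rfl⟩ := hP.imp (·.exists_eq_map f) (·.exists_eq_map f)
  · exact (Finset.card_map _).trans (cycleGraph_card_of_isMaxIndepIn hm q F (.inl hF))
  · exact (Finset.card_map _).trans (cycleGraph_card_of_isMaxIndepIn hm q F (.inr hF))

theorem IsCycleGraphOn.not_unmixedOn_erase (h : IsCycleGraphOn K A m) (hm4 : 4 ≤ m)
    (hm5 : m ≠ 5) (hx : x ∈ A) : ¬UnmixedOn K (A.erase x) := by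
  obtain ⟨f, rfl⟩ := h.exists_embedding
  obtain ⟨q, -, rfl⟩ := Finset.mem_map.1 hx
  obtain ⟨k, rfl⟩ : ∃ k, m = k + 1 := ⟨m - 1, by omega⟩
  intro hK
  rw [← Finset.map_erase, ← cycleGraph.map_pathEmbedding q] at hK
  exact pathGraph_not_unmixedOn (by omega) (by omega) ((hK.of_embedding f).of_embedding _)

end CycleGraphOn

theorem SimpleGraph.sup_iSup_adj {α ι : Type*} {G : SimpleGraph α} {Gs : ι → SimpleGraph α}
    {u v : α} :
    (G ⊔ ⨆ i, Gs i).Adj u v ↔ G.Adj u v ∨ ∃ i, (Gs i).Adj u v := by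
  simp

/-- `G ⊔ ⨆ i, Gs i` is the attachment graph `G(G_1, …, G_n)`: `G` lives on the roots `x i` and
`Gs i` on the block `B i ∋ x i`, the blocks being pairwise disjoint. -/
structure IsAttachment {α ι : Type*} (x : ι → α) (B : ι → Finset α) (G : SimpleGraph α)
    (Gs : ι → SimpleGraph α) : Prop where
  mem_block : ∀ i, x i ∈ B i
  disjoint : ∀ i j, i ≠ j → Disjoint (B i) (B j)
  base_adj : ∀ u v, G.Adj u v → (∃ i, u = x i) ∧ ∃ j, v = x j
  block_adj : ∀ i u v, (Gs i).Adj u v → u ∈ B i ∧ v ∈ B i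

namespace IsAttachment

open SimpleGraph

variable {α ι : Type*} {x : ι → α} {B : ι → Finset α} {G : SimpleGraph α}
  {Gs : ι → SimpleGraph α} {S : Finset α}

theorem index_eq (hA : IsAttachment x B G Gs) {u : α} {i j : ι} (hi : u ∈ B i) (hj : u ∈ B j) :
    i = j := by
  by_contra h
  exact Finset.disjoint_left.1 (hA.disjoint i j h) hi hj

theorem isMaxIndepIn_inter [Fintype ι] [DecidableEq α] (hA : IsAttachment x B G Gs)
    (hS : IsMaxIndepIn (G ⊔ ⨆ i, Gs i) (Finset.univ.biUnion B) S) (i : ι) :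
    IsMaxIndepIn (Gs i) (B i) (S ∩ B i) ∨
      IsMaxIndepIn (Gs i) ((B i).erase (x i)) (S ∩ B i) := by
  rw [isMaxIndepIn_iff] at hS
  obtain ⟨⟨-, hind⟩, hdom⟩ := hS
  have hindi : ∀ u ∈ S ∩ B i, ∀ v ∈ S ∩ B i, ¬(Gs i).Adj u v := fun u hu v hv huv =>
    hind u (Finset.mem_of_mem_inter_left hu) v (Finset.mem_of_mem_inter_left hv)
      (sup_iSup_adj.2 (.inr ⟨i, huv⟩))
  -- a vertex of `B i` other than `x i` has all its neighbours in its own block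
  have hdomi : ∀ v ∈ B i, v ∉ S ∩ B i → v ≠ x i → ∃ u ∈ S ∩ B i, (Gs i).Adj u v := by
    intro v hv hvS hvx
    obtain ⟨u, huS, huv⟩ := hdom v (Finset.mem_biUnion.2 ⟨i, Finset.mem_univ i, hv⟩)
      fun h => hvS (Finset.mem_inter.2 ⟨h, hv⟩)
    rcases sup_iSup_adj.1 huv with hG | ⟨j, hj⟩
    · obtain ⟨-, j, rfl⟩ := hA.base_adj u v hG
      exact absurd (congrArg x (hA.index_eq (hA.mem_block j) hv)) hvx
    obtain ⟨hu, hv'⟩ := hA.block_adj j u v hj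
    obtain rfl := hA.index_eq hv' hv
    exact ⟨u, Finset.mem_inter.2 ⟨huS, hu⟩, hj⟩
  by_cases hxS : x i ∈ S
  · refine .inl (isMaxIndepIn_iff.2 ⟨⟨Finset.inter_subset_right, hindi⟩, fun v hv hvS => ?_⟩)
    exact hdomi v hv hvS fun h => hvS (h ▸ Finset.mem_inter.2 ⟨hxS, hA.mem_block i⟩)
  · refine .inr (isMaxIndepIn_iff.2 ⟨⟨fun v hv => ?_, hindi⟩, fun v hv hvS => ?_⟩)
    · obtain ⟨hvS, hvB⟩ := Finset.mem_inter.1 hv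
      exact Finset.mem_erase.2 ⟨fun h => hxS (h ▸ hvS), hvB⟩
    · obtain ⟨hvx, hvB⟩ := Finset.mem_erase.1 hv
      exact hdomi v hvB hvS hvx

theorem card_eq_sum_card_inter [Fintype ι] [DecidableEq α] (hA : IsAttachment x B G Gs)
    (hS : S ⊆ Finset.univ.biUnion B) :
    S.card = ∑ i, (S ∩ B i).card := by
  conv_lhs => rw [← Finset.inter_eq_left.2 hS, Finset.inter_biUnion]
  exact Finset.card_biUnion fun i _ j _ hij =>
    (hA.disjoint i j hij).mono Finset.inter_subset_right Finset.inter_subset_right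

theorem unmixedOn [Fintype ι] [DecidableEq α] (hA : IsAttachment x B G Gs)
    (h : ∀ i, UnmixedWithErase (Gs i) (B i) (x i)) :
    UnmixedOn (G ⊔ ⨆ i, Gs i) (Finset.univ.biUnion B) := by
  choose r hr using h
  have hcard : ∀ S, IsMaxIndepIn (G ⊔ ⨆ i, Gs i) (Finset.univ.biUnion B) S →
      S.card = ∑ i, r i := fun S hS => by
    rw [hA.card_eq_sum_card_inter hS.1.1]
    exact Finset.sum_congr rfl fun i _ => hr i _ (hA.isMaxIndepIn_inter hS i)
  exact fun S T hS hT => (hcard S hS).trans (hcard T hT).symm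

theorem isMaxIndepIn_biUnion [Fintype ι] [DecidableEq α] (hA : IsAttachment x B G Gs)
    {D : ι → Finset α}
    (hD : ∀ j, IsMaxIndepIn (Gs j) (B j) (D j) ∨
      IsMaxIndepIn (Gs j) ((B j).erase (x j)) (D j) ∧ ∃ k, x k ∈ D k ∧ G.Adj (x k) (x j))
    (hG : ∀ j k, x j ∈ D j → x k ∈ D k → ¬G.Adj (x j) (x k)) :
    IsMaxIndepIn (G ⊔ ⨆ i, Gs i) (Finset.univ.biUnion B) (Finset.univ.biUnion D) := by
  have hDB : ∀ j, D j ⊆ B j := fun j =>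
    (hD j).elim (·.1.1) fun h => h.1.1.1.trans (Finset.erase_subset _ _)
  have hDind : ∀ j, ∀ u ∈ D j, ∀ v ∈ D j, ¬(Gs j).Adj u v := fun j =>
    (hD j).elim (·.1.2) (·.1.1.2)
  have hmem {u : α} {k : ι} (h : u ∈ D k) : u ∈ Finset.univ.biUnion D :=
    Finset.mem_biUnion.2 ⟨k, Finset.mem_univ k, h⟩
  rw [isMaxIndepIn_iff]
  refine ⟨⟨Finset.biUnion_mono fun j _ => hDB j, fun u hu v hv huv => ?_⟩, fun v hv hvD => ?_⟩
  · obtain ⟨j, -, hu⟩ := Finset.mem_biUnion.1 hu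
    obtain ⟨k, -, hv⟩ := Finset.mem_biUnion.1 hv
    rcases sup_iSup_adj.1 huv with hGuv | ⟨l, hl⟩
    · obtain ⟨⟨a, rfl⟩, b, rfl⟩ := hA.base_adj _ _ hGuv
      obtain rfl := hA.index_eq (hA.mem_block a) (hDB j hu)
      obtain rfl := hA.index_eq (hA.mem_block b) (hDB k hv)
      exact hG a b hu hv hGuv
    · obtain ⟨hul, hvl⟩ := hA.block_adj l u v hl
      obtain rfl := hA.index_eq hul (hDB j hu)
      obtain rfl := hA.index_eq hvl (hDB k hv)
      exact hDind l u hu v hv hl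
  obtain ⟨j, -, hvB⟩ := Finset.mem_biUnion.1 hv
  have hvDj : v ∉ D j := fun h => hvD (hmem h)
  rcases hD j with hmax | ⟨hmax, k, hk, hkj⟩
  · obtain ⟨u, hu, huv⟩ := (isMaxIndepIn_iff.1 hmax).2 v hvB hvDj
    exact ⟨u, hmem hu, sup_iSup_adj.2 (.inr ⟨j, huv⟩)⟩
  obtain rfl | hvx := eq_or_ne v (x j)
  · exact ⟨x k, hmem hk, sup_iSup_adj.2 (.inl hkj)⟩
  obtain ⟨u, hu, huv⟩ := (isMaxIndepIn_iff.1 hmax).2 v (Finset.mem_erase.2 ⟨hvx, hvB⟩) hvDj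
  exact ⟨u, hmem hu, sup_iSup_adj.2 (.inr ⟨j, huv⟩)⟩

theorem unmixedOn_of_update [Fintype ι] [DecidableEq ι] [DecidableEq α]
    (hA : IsAttachment x B G Gs) (hH : UnmixedOn (G ⊔ ⨆ i, Gs i) (Finset.univ.biUnion B))
    {i : ι} {A : Finset α} (hAB : A ⊆ B i) {D : ι → Finset α} (hDB : ∀ j, D j ⊆ B j)
    (hext : ∀ P, IsMaxIndepIn (Gs i) A P →
      IsMaxIndepIn (G ⊔ ⨆ i, Gs i) (Finset.univ.biUnion B)
        (Finset.univ.biUnion (Function.update D i P))) :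
    UnmixedOn (Gs i) A := by
  have hsplit (P : Finset α) :
      Finset.univ.biUnion (Function.update D i P) = P ∪ (Finset.univ.erase i).biUnion D := by
    conv_lhs => rw [← Finset.insert_erase (Finset.mem_univ i), Finset.biUnion_insert]
    rw [Function.update_self]
    exact congrArg _ (Finset.biUnion_congr rfl fun j hj =>
      Function.update_of_ne (Finset.ne_of_mem_erase hj) _ _)
  refine hH.of_isMaxIndepIn_union ?_ fun P hP => hsplit P ▸ hext P hP
  exact (Finset.disjoint_biUnion_right _ _ _).2 fun j hj =>
    ((hA.disjoint i j (Finset.ne_of_mem_erase hj).symm).mono_left hAB).mono_right (hDB j)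

theorem exists_isMaxIndepIn_notMem [DecidableEq α] (hA : IsAttachment x B G Gs)
    (hnbr : ∀ j, ∃ y, (Gs j).Adj (x j) y) (j : ι) :
    ∃ E, IsMaxIndepIn (Gs j) (B j) E ∧ x j ∉ E :=
  let ⟨_, hy⟩ := hnbr j
  _root_.exists_isMaxIndepIn_notMem (hA.block_adj j _ _ hy).2 hy

theorem unmixedOn_block [Fintype ι] [DecidableEq ι] [DecidableEq α]
    (hA : IsAttachment x B G Gs) (hH : UnmixedOn (G ⊔ ⨆ i, Gs i) (Finset.univ.biUnion B))
    (hnbr : ∀ j, ∃ y, (Gs j).Adj (x j) y) (i : ι) : UnmixedOn (Gs i) (B i) := by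
  choose E hE hxE using hA.exists_isMaxIndepIn_notMem hnbr
  refine hA.unmixedOn_of_update hH subset_rfl (fun j => (hE j).1.1) fun P hP =>
    hA.isMaxIndepIn_biUnion (fun j => .inl ?_) fun j k hj hk => ?_
  · rcases eq_or_ne j i with rfl | hji
    · rwa [Function.update_self]
    · rw [Function.update_of_ne hji]
      exact hE j
  · have hsel (l : ι) (hl : x l ∈ Function.update E i P l) : l = i := by
      by_contra hli
      rw [Function.update_of_ne hli] at hl
      exact hxE l hl
    rw [hsel j hj, hsel k hk]
    exact G.loopless.irrefl _

theorem unmixedOn_erase_block [Fintype ι] [DecidableEq ι] [DecidableEq α]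
    (hA : IsAttachment x B G Gs) (hH : UnmixedOn (G ⊔ ⨆ i, Gs i) (Finset.univ.biUnion B))
    (hnbr : ∀ j, ∃ y, (Gs j).Adj (x j) y) (hnoiso : ∀ j, ∃ u, G.Adj (x j) u) (i : ι) :
    UnmixedOn (Gs i) ((B i).erase (x i)) := by
  choose E hE hxE using hA.exists_isMaxIndepIn_notMem hnbr
  obtain ⟨u, hu⟩ := hnoiso i
  obtain ⟨-, j₀, rfl⟩ := hA.base_adj _ _ hu
  have hj₀ : j₀ ≠ i := by
    rintro rfl
    exact G.loopless.irrefl _ hu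
  obtain ⟨E₀, hE₀, hxE₀⟩ := exists_isMaxIndepIn_mem (K := Gs j₀) (hA.mem_block j₀)
  -- `x j₀` is the only attachment vertex chosen, and it dominates `x i`
  set D := Function.update E j₀ E₀
  have hDmax (j : ι) : IsMaxIndepIn (Gs j) (B j) (D j) := by
    rcases eq_or_ne j j₀ with rfl | hj
    · simpa [D] using hE₀
    · simpa [D, hj] using hE j
  refine hA.unmixedOn_of_update hH (Finset.erase_subset _ _) (fun j => (hDmax j).1.1) fun P hP =>
    hA.isMaxIndepIn_biUnion (fun j => ?_) fun j k hj hk => ?_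
  · rcases eq_or_ne j i with rfl | hji
    · refine .inr ⟨by rwa [Function.update_self], j₀, ?_, hu.symm⟩
      simpa [Function.update_of_ne hj₀, D] using hxE₀
    · exact .inl (by simpa [Function.update_of_ne hji] using hDmax j)
  · have hsel (l : ι) (hl : x l ∈ Function.update D i P l) : l = j₀ := by
      rcases eq_or_ne l i with rfl | hli
      · rw [Function.update_self] at hl
        exact absurd (hP.1.1 hl) (Finset.notMem_erase _ _)
      by_contra hl₀
      rw [Function.update_of_ne hli, show D l = E l from Function.update_of_ne hl₀ _ _] at hl
      exact hxE l hl
    rw [hsel j hj, hsel k hk]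
    exact G.loopless.irrefl _

end IsAttachment

theorem stmt_14_general {V : Type*} [DecidableEq V] (n t : ℕ) (x : Fin n → V)
    (B : Fin n → Finset V) (G : SimpleGraph V) (Gs : Fin n → SimpleGraph V)
    (ℓ : Fin n → ℕ)
    (hGsupp : ∀ u v, G.Adj u v → (∃ i, u = x i) ∧ (∃ j, v = x j))
    -- `G` has no isolated vertex
    (hnoiso : ∀ i, ∃ u, G.Adj (x i) u)
    (hxB : ∀ i, x i ∈ B i)
    (hBdisj : ∀ i j, i ≠ j → Disjoint (B i) (B j))
    -- for `i < t`, `Gs i` is a cycle graph of length `ℓ i ≥ 3` on the vertex set `B i`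
    (hcyc : ∀ i : Fin n, (i : ℕ) < t → 3 ≤ ℓ i ∧ IsCycleGraphOn (Gs i) (B i) (ℓ i))
    (hGssupp : ∀ i : Fin n, t ≤ (i : ℕ) → ∀ u v, (Gs i).Adj u v → u ∈ B i ∧ v ∈ B i)
    (hsimp : ∀ i : Fin n, t ≤ (i : ℕ) → ∃ z ∈ B i,
      (∀ u v, (Gs i).Adj z u → (Gs i).Adj z v → u ≠ v → (Gs i).Adj u v) ∧
      (Gs i).Adj z (x i)) :
    UnmixedOn (G ⊔ ⨆ i, Gs i) (Finset.univ.biUnion B) ↔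
      (∀ i : Fin n, (i : ℕ) < t → ℓ i = 3 ∨ ℓ i = 5) ∧
        ∀ i : Fin n, t ≤ (i : ℕ) → UnmixedOn (Gs i) (B i) := by
  have hA : IsAttachment x B G Gs := ⟨hxB, hBdisj, hGsupp, fun i =>
    if hi : (i : ℕ) < t then (hcyc i hi).2.1 else hGssupp i (not_lt.1 hi)⟩
  have hnbr (i : Fin n) : ∃ y, (Gs i).Adj (x i) y := by
    rcases lt_or_ge (i : ℕ) t with hi | hi
    · exact (hcyc i hi).2.exists_adj (by linarith [(hcyc i hi).1]) (hxB i)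
    · obtain ⟨z, -, -, hzx⟩ := hsimp i hi
      exact ⟨z, hzx.symm⟩
  constructor
  · intro hH
    refine ⟨fun i hi => ?_, fun i _ => hA.unmixedOn_block hH hnbr i⟩
    obtain ⟨hℓ, hcycle⟩ := hcyc i hi
    by_contra hℓ35
    exact hcycle.not_unmixedOn_erase (by omega) (by omega) (hxB i)
      (hA.unmixedOn_erase_block hH hnbr hnoiso i)
  · rintro ⟨hℓ35, hunmixed⟩
    refine hA.unmixedOn fun i => ?_
    rcases lt_or_ge (i : ℕ) t with hi | hi
    · exact (hcyc i hi).2.unmixedWithErase (hℓ35 i hi) (hxB i)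
    · obtain ⟨z, hz, hzsimp, hzx⟩ := hsimp i hi
      exact (hunmixed i hi).unmixedWithErase_of_simplicial hz hzx hzsimp

/-- the attachment graph `G(C_1, …, C_t, G_{t+1}, …, G_n)` is unmixed iff
every cycle has length 3 or 5 and `Gs i` is unmixed for every `i ≥ t`. -/
theorem stmt_14 {V : Type*} [DecidableEq V] (n t : ℕ) (ht : t ≤ n) (x : Fin n → V)
    (B : Fin n → Finset V) (G : SimpleGraph V) (Gs : Fin n → SimpleGraph V)
    (ℓ : Fin n → ℕ)
    (hxinj : Function.Injective x)
    (hGsupp : ∀ u v, G.Adj u v → (∃ i, u = x i) ∧ (∃ j, v = x j))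
    -- `G` has no isolated vertex
    (hnoiso : ∀ i, ∃ u, G.Adj (x i) u)
    (hxB : ∀ i, x i ∈ B i)
    (hBdisj : ∀ i j, i ≠ j → Disjoint (B i) (B j))
    -- for `i < t`, `Gs i` is a cycle graph of length `ℓ i ≥ 3` on the vertex set `B i`
    (hcyc : ∀ i : Fin n, (i : ℕ) < t → 3 ≤ ℓ i ∧ IsCycleGraphOn (Gs i) (B i) (ℓ i))
    -- for `i ≥ t`, `Gs i` is a connected chordal graph with at least two vertices,
    -- attached to `G` at a neighbor `x i` of a simplicial vertex `z` of `Gs i`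
    (hBcard : ∀ i : Fin n, t ≤ (i : ℕ) → 2 ≤ (B i).card)
    (hGssupp : ∀ i : Fin n, t ≤ (i : ℕ) → ∀ u v, (Gs i).Adj u v → u ∈ B i ∧ v ∈ B i)
    (hconn : ∀ i : Fin n, t ≤ (i : ℕ) → ((Gs i).induce ((B i : Set V))).Connected)
    (hchordal : ∀ i : Fin n, t ≤ (i : ℕ) → IsChordal (Gs i))
    (hsimp : ∀ i : Fin n, t ≤ (i : ℕ) → ∃ z ∈ B i,
      (∀ u v, (Gs i).Adj z u → (Gs i).Adj z v → u ≠ v → (Gs i).Adj u v) ∧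
      (Gs i).Adj z (x i)) :
    UnmixedOn (G ⊔ ⨆ i, Gs i) (Finset.univ.biUnion B) ↔
      (∀ i : Fin n, (i : ℕ) < t → ℓ i = 3 ∨ ℓ i = 5) ∧
        ∀ i : Fin n, t ≤ (i : ℕ) → UnmixedOn (Gs i) (B i) :=
  stmt_14_general n t x B G Gs ℓ hGsupp hnoiso hxB hBdisj hcyc hGssupp hsimp
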